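/- arXiv:1406.5791 — 3 statements merged into one kernel-verified Lean document; each statement's English description precedes it below -/
import Mathlib

section
/- For a d-regular graph G with normalized Laplacian L, and any 0 < δ ≤ 1/2, the small-set expansion satisfies φ_δ(G) ≤ sqrt((2 − λ_δ)·λ_δ), where λ_δ is the minimum Rayleigh quotient of L over δn-sparse vectors. (Hard direction of sparse Cheeger's inequality with improved constant.) -/
open Matrix Finset

/-!
Put `g = x²` and sweep a threshold `t` through the values of `g`. Weighting each threshold by
the gap to the next value, the superlevel sets `{g > t}` satisfy the layer-cake identities
`∫ |{g > t}| dt = ∑ g` and `∫ |E({g > t}, {g ≤ t})| dt = ½ ∑ A_ij |g_i - g_j|`, so some superlevel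
set has cut at most `|{g > t}|` times the ratio of the two right-hand sides. Since
`|x_i² - x_j²| = |x_i - x_j| |x_i + x_j|`, Cauchy–Schwarz bounds that ratio by
`√(∑ A_ij (x_i - x_j)² · ∑ A_ij (x_i + x_j)²) / (2 ∑ x_i²) = d √((2 - λ) λ)`. For `t ≥ 0` the set
`{g > t}` lies in the support of `x`, so it is `δn`-small.
-/

theorem Monotone.sum_range_sub_mul_ite_lt {v : ℕ → ℝ} (hv : Monotone v) {M N : ℕ}
    (hMN : M ≤ N) :
    ∑ m ∈ range N, (v (m + 1) - v m) * (if v m < v M then 1 else 0) = v M - v 0 := by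
  have hterm : ∀ m ∈ range N, (v (m + 1) - v m) * (if v m < v M then 1 else 0)
      = if m < M then v (m + 1) - v m else 0 := by
    intro m _
    by_cases hm : m < M
    · by_cases hlt : v m < v M
      · simp [hm, hlt]
      -- a threshold equal to `v M` below index `M` has zero gap
      · simp only [hm, hlt, if_true, if_false, mul_zero]
        linarith [hv hm.le, hv (Nat.succ_le_of_lt hm), hv m.le_succ]
    · simp [hm, not_lt.2 (hv (not_lt.1 hm))]
  rw [sum_congr rfl hterm, ← sum_filter,
    show {m ∈ range N | m < M} = range M by ext; simp; omega, sum_range_sub]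

theorem Monotone.sum_range_sub_mul_ite_le_and_lt {v : ℕ → ℝ} (hv : Monotone v) {M M' N : ℕ}
    (hM : M ≤ N) (hM' : M' ≤ N) :
    ∑ m ∈ range N, (v (m + 1) - v m) * (if v M' ≤ v m ∧ v m < v M then 1 else 0)
      = (v M - v M')⁺ := by
  rcases le_total (v M) (v M') with hle | hle
  · rw [posPart_eq_zero.2 (sub_nonpos.2 hle)]
    refine sum_eq_zero fun m _ => ?_
    rw [if_neg (fun h => (h.1.trans_lt h.2).not_ge hle), mul_zero]
  · have hind : ∀ m ∈ range N, (v (m + 1) - v m) * (if v M' ≤ v m ∧ v m < v M then 1 else 0)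
        = (v (m + 1) - v m) * (if v m < v M then 1 else 0)
          - (v (m + 1) - v m) * (if v m < v M' then 1 else 0) := by
      intro m _
      by_cases h₁ : v m < v M'
      · simp [h₁, h₁.trans_le hle, not_le.2 h₁]
      · simp [h₁, not_lt.1 h₁]
    rw [sum_congr rfl hind, sum_sub_distrib, hv.sum_range_sub_mul_ite_lt hM,
      hv.sum_range_sub_mul_ite_lt hM', posPart_eq_self.2 (sub_nonneg.2 hle)]
    ring

theorem Finset.exists_monotone_nat_enum {α : Type*} [LinearOrder α] (s : Finset α)
    (hs : s.Nonempty) :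
    ∃ v : ℕ → α, Monotone v ∧ (∀ m, v m ∈ s) ∧ ∀ a ∈ s, ∃ M < #s, v M = a := by
  have hpos : 0 < #s := hs.card_pos
  let e := s.orderEmbOfFin rfl
  refine ⟨fun m => e ⟨min m (#s - 1), by omega⟩, fun m m' h => ?_, fun m => ?_, fun a ha => ?_⟩
  · exact e.monotone (Fin.mk_le_mk.2 (min_le_min_right _ h))
  · exact s.orderEmbOfFin_mem rfl _
  · obtain ⟨⟨M, hM⟩, rfl⟩ : a ∈ Set.range e := by rwa [s.range_orderEmbOfFin]
    exact ⟨M, hM, congrArg e (Fin.ext (min_eq_left (by omega)))⟩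

theorem Finset.exists_pos_le_mul_of_sum_mul_le {ι : Type*} {I : Finset ι} {w a b : ι → ℝ}
    {s : ℝ} (hw : ∀ i ∈ I, 0 ≤ w i) (ha : ∀ i ∈ I, 0 ≤ a i) (hb : ∀ i ∈ I, 0 ≤ b i)
    (hpos : 0 < ∑ i ∈ I, w i * b i) (hle : ∑ i ∈ I, w i * a i ≤ s * ∑ i ∈ I, w i * b i) :
    ∃ i ∈ I, 0 < b i ∧ a i ≤ s * b i := by
  by_contra! hlt
  obtain ⟨i₀, hi₀, hwb⟩ := exists_lt_of_sum_lt (by simpa using hpos : ∑ i ∈ I, (0 : ℝ) < _)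
  have hb₀ : 0 < b i₀ := pos_of_mul_pos_right hwb (hw i₀ hi₀)
  have hw₀ : 0 < w i₀ := pos_of_mul_pos_left hwb (hb i₀ hi₀)
  have hstrict : ∑ i ∈ I, w i * (s * b i) < ∑ i ∈ I, w i * a i := by
    refine sum_lt_sum (fun i hi => mul_le_mul_of_nonneg_left ?_ (hw i hi))
      ⟨i₀, hi₀, mul_lt_mul_of_pos_left (hlt i₀ hi₀ hb₀) hw₀⟩
    rcases (hb i hi).eq_or_lt with h | h
    · simpa [← h] using ha i hi
    · exact (hlt i hi h).le
  rw [mul_sum] at hle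
  linarith [sum_congr rfl fun i (_ : i ∈ I) => mul_left_comm (w i) s (b i)]

section Sweep

variable {ι : Type*} [Fintype ι] {v : ℕ → ℝ} {N : ℕ} {g : ι → ℝ}

theorem Monotone.sum_range_sub_mul_card_filter_lt (hv : Monotone v)
    (hg : ∀ i, ∃ M ≤ N, v M = g i) :
    ∑ m ∈ range N, (v (m + 1) - v m) * #{i | v m < g i} = ∑ i, (g i - v 0) := by
  simp_rw [natCast_card_filter, mul_sum]
  rw [sum_comm]
  refine sum_congr rfl fun i _ => ?_
  obtain ⟨M, hM, hvM⟩ := hg i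
  rw [← hvM, hv.sum_range_sub_mul_ite_lt hM]

variable [DecidableEq ι]

/-- The weight `|E(S, V \ S)|` of the edges leaving `S`. -/
def cutWeight (A : Matrix ι ι ℝ) (S : Finset ι) : ℝ := ∑ i ∈ S, ∑ j ∈ Sᶜ, A i j

theorem cutWeight_nonneg {A : Matrix ι ι ℝ} (hA : ∀ i j, 0 ≤ A i j) (S : Finset ι) :
    0 ≤ cutWeight A S :=
  sum_nonneg fun i _ => sum_nonneg fun j _ => hA i j

theorem cutWeight_filter_lt (A : Matrix ι ι ℝ) (g : ι → ℝ) (t : ℝ) :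
    cutWeight A {i | t < g i} = ∑ i, ∑ j, A i j * if g j ≤ t ∧ t < g i then 1 else 0 := by
  rw [cutWeight, compl_filter, sum_filter]
  refine sum_congr rfl fun i _ => ?_
  by_cases hi : t < g i
  · simp [hi, sum_filter]
  · simp [hi]

theorem Monotone.sum_range_sub_mul_cutWeight_filter_lt (hv : Monotone v)
    (hg : ∀ i, ∃ M ≤ N, v M = g i) (A : Matrix ι ι ℝ) :
    ∑ m ∈ range N, (v (m + 1) - v m) * cutWeight A {i | v m < g i}
      = ∑ i, ∑ j, A i j * (g i - g j)⁺ := by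
  simp_rw [cutWeight_filter_lt, mul_sum]
  rw [sum_comm]
  refine sum_congr rfl fun i _ => ?_
  rw [sum_comm]
  refine sum_congr rfl fun j _ => ?_
  obtain ⟨M, hM, hvM⟩ := hg i
  obtain ⟨M', hM', hvM'⟩ := hg j
  simp_rw [mul_left_comm _ (A i j), ← mul_sum, ← hvM, ← hvM',
    hv.sum_range_sub_mul_ite_le_and_lt hM hM']

theorem exists_cutWeight_filter_lt_le {A : Matrix ι ι ℝ} (hA : ∀ i j, 0 ≤ A i j)
    (hg : ∀ i, 0 ≤ g i) (hpos : 0 < ∑ i, g i) {s : ℝ}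
    (h : ∑ i, ∑ j, A i j * (g i - g j)⁺ ≤ s * ∑ i, g i) :
    ∃ t, 0 ≤ t ∧ ({i | t < g i} : Finset ι).Nonempty ∧
      cutWeight A {i | t < g i} ≤ s * #{i | t < g i} := by
  obtain ⟨v, hv, hv_mem, hv_enum⟩ :=
    (insert 0 (univ.image g)).exists_monotone_nat_enum (insert_nonempty _ _)
  have hv_nonneg : ∀ m, 0 ≤ v m := fun m => by
    rcases mem_insert.1 (hv_mem m) with h | h
    · exact h.ge
    · obtain ⟨i, -, hi⟩ := mem_image.1 h
      exact hi ▸ hg i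
  have hv0 : v 0 = 0 := by
    obtain ⟨M, -, hM⟩ := hv_enum 0 (mem_insert_self _ _)
    exact le_antisymm (hM ▸ hv M.zero_le) (hv_nonneg 0)
  have hg_enum : ∀ i, ∃ M ≤ #(insert 0 (univ.image g)), v M = g i := fun i => by
    obtain ⟨M, hM, hvM⟩ := hv_enum (g i) (mem_insert_of_mem (mem_image_of_mem g (mem_univ i)))
    exact ⟨M, hM.le, hvM⟩
  have hcard := hv.sum_range_sub_mul_card_filter_lt hg_enum
  simp only [hv0, sub_zero] at hcard
  obtain ⟨m, -, hm_pos, hm_le⟩ := exists_pos_le_mul_of_sum_mul_le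
    (fun m _ => sub_nonneg.2 (hv m.le_succ)) (fun m _ => cutWeight_nonneg hA _)
    (fun m _ => Nat.cast_nonneg _) (hcard ▸ hpos)
    (by rwa [hcard, hv.sum_range_sub_mul_cutWeight_filter_lt hg_enum])
  exact ⟨v m, hv_nonneg m, card_pos.1 (by exact_mod_cast hm_pos), hm_le⟩

end Sweep

section Energy

variable {ι : Type*} [Fintype ι] {A : Matrix ι ι ℝ}

theorem Matrix.IsSymm.sum_sum_mul_posPart_sub (hA : A.IsSymm) (g : ι → ℝ) :
    ∑ i, ∑ j, A i j * (g i - g j)⁺ = (∑ i, ∑ j, A i j * |g i - g j|) / 2 := by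
  have hswap : ∑ i, ∑ j, A i j * (g i - g j)⁺ = ∑ i, ∑ j, A i j * (g i - g j)⁻ := by
    rw [sum_comm]
    refine sum_congr rfl fun i _ => sum_congr rfl fun j _ => ?_
    rw [hA.apply, negPart_def, neg_sub, ← posPart_def]
  have hsum : ∑ i, ∑ j, A i j * (g i - g j)⁺ + ∑ i, ∑ j, A i j * (g i - g j)⁻
      = ∑ i, ∑ j, A i j * |g i - g j| := by
    simp only [← sum_add_distrib, ← mul_add, posPart_add_negPart]
  linarith

theorem sq_sum_sum_mul_abs_sq_sub_sq_le (hA : ∀ i j, 0 ≤ A i j) (x : ι → ℝ) :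
    (∑ i, ∑ j, A i j * |x i ^ 2 - x j ^ 2|) ^ 2
      ≤ (∑ i, ∑ j, A i j * (x i - x j) ^ 2) * ∑ i, ∑ j, A i j * (x i + x j) ^ 2 := by
  simp only [← sum_product' univ univ]
  refine sum_sq_le_sum_mul_sum_of_sq_le_mul _ (fun p _ => by have := hA p.1 p.2; positivity)
    (fun p _ => by have := hA p.1 p.2; positivity) fun p _ => le_of_eq ?_
  rw [mul_pow, sq_abs]
  ring

theorem Matrix.IsSymm.sum_sum_mul_add_mul_sq (hA : A.IsSymm) {d : ℝ}
    (hreg : ∀ i, ∑ j, A i j = d) (x : ι → ℝ) (a : ℝ) :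
    ∑ i, ∑ j, A i j * (x i + a * x j) ^ 2
      = (1 + a ^ 2) * d * (x ⬝ᵥ x) + 2 * a * (x ⬝ᵥ A *ᵥ x) := by
  have hrow : ∑ i, ∑ j, A i j * x i ^ 2 = d * (x ⬝ᵥ x) := by
    simp only [← sum_mul, hreg, dotProduct, mul_sum, sq]
  have hcol : ∑ i, ∑ j, A i j * x j ^ 2 = d * (x ⬝ᵥ x) := by
    rw [sum_comm, ← hrow]
    simp only [hA.apply]
  have hcross : ∑ i, ∑ j, A i j * (x i * x j) = x ⬝ᵥ A *ᵥ x := by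
    simp only [dotProduct, mulVec, mul_sum]
    exact sum_congr rfl fun i _ => sum_congr rfl fun j _ => by ring
  have hexpand : ∀ i j, A i j * (x i + a * x j) ^ 2
      = A i j * x i ^ 2 + 2 * a * (A i j * (x i * x j)) + a ^ 2 * (A i j * x j ^ 2) :=
    fun i j => by ring
  simp only [hexpand, sum_add_distrib, ← mul_sum, hrow, hcol, hcross]
  ring

theorem Matrix.IsSymm.sum_sum_mul_abs_sq_sub_sq_le (hsymm : A.IsSymm) (hA : ∀ i j, 0 ≤ A i j)
    {d : ℝ} (hd : 0 ≤ d) (hreg : ∀ i, ∑ j, A i j = d) (x : ι → ℝ) {lam : ℝ}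
    (hxAx : x ⬝ᵥ A *ᵥ x = d * (1 - lam) * (x ⬝ᵥ x)) :
    ∑ i, ∑ j, A i j * |x i ^ 2 - x j ^ 2| ≤ 2 * (d * (x ⬝ᵥ x)) * √((2 - lam) * lam) := by
  have hQ := hsymm.sum_sum_mul_add_mul_sq hreg x (-1)
  have hP := hsymm.sum_sum_mul_add_mul_sq hreg x 1
  simp only [neg_one_mul, ← sub_eq_add_neg, one_mul] at hQ hP
  have hCS := sq_sum_sum_mul_abs_sq_sub_sq_le hA x
  have hxx : 0 ≤ x ⬝ᵥ x := sum_nonneg fun i _ => mul_self_nonneg (x i)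
  calc _ ≤ √((2 * (d * (x ⬝ᵥ x))) ^ 2 * ((2 - lam) * lam)) :=
        Real.le_sqrt_of_sq_le (hCS.trans_eq (by rw [hQ, hP, hxAx]; ring))
    _ = _ := by rw [Real.sqrt_mul (sq_nonneg _), Real.sqrt_sq (by positivity)]

end Energy

theorem sparse_cheeger_hard_direction_general (n d : ℕ) (hd : 0 < d)
    (A : Matrix (Fin n) (Fin n) ℝ) (hsymm : A.IsSymm)
    (h01 : ∀ i j, A i j = 0 ∨ A i j = 1)
    (hreg : ∀ i, ∑ j, A i j = d)
    (δ : ℝ)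
    (x : Fin n → ℝ) (hx : x ≠ 0)
    (hsparse : ((Function.support x).ncard : ℝ) ≤ δ * n)
    (lam : ℝ)
    (hlam : lam = (x ⬝ᵥ (1 - (d : ℝ)⁻¹ • A).mulVec x) / (x ⬝ᵥ x)) :
    ∃ S : Finset (Fin n), S.Nonempty ∧ ((S.card : ℝ) ≤ δ * n) ∧
      (∑ i ∈ S, ∑ j ∈ Sᶜ, A i j) / (d * S.card)
        ≤ Real.sqrt ((2 - lam) * lam) := by
  have hA : ∀ i j, 0 ≤ A i j := fun i j => by rcases h01 i j with h | h <;> simp [h]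
  have hdR : (0 : ℝ) < d := Nat.cast_pos.2 hd
  have hxx₀ : x ⬝ᵥ x ≠ 0 := dotProduct_self_eq_zero.not.2 hx
  have hxx : 0 < ∑ i, x i ^ 2 := by
    simpa only [dotProduct, sq] using
      (sum_nonneg fun i _ => mul_self_nonneg (x i)).lt_of_ne hxx₀.symm
  have hxAx : x ⬝ᵥ A *ᵥ x = d * (1 - lam) * (x ⬝ᵥ x) := by
    rw [hlam, sub_mulVec, one_mulVec, smul_mulVec, dotProduct_sub, dotProduct_smul, smul_eq_mul]
    field_simp
    ring
  have henergy :
      ∑ i, ∑ j, A i j * (x i ^ 2 - x j ^ 2)⁺ ≤ d * √((2 - lam) * lam) * ∑ i, x i ^ 2 := by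
    have habs := hsymm.sum_sum_mul_abs_sq_sub_sq_le hA hdR.le hreg x hxAx
    simp only [dotProduct, ← sq] at habs
    rw [hsymm.sum_sum_mul_posPart_sub]
    linarith
  obtain ⟨t, ht, hne, hcut⟩ :=
    exists_cutWeight_filter_lt_le hA (fun i => sq_nonneg (x i)) hxx henergy
  refine ⟨_, hne, ?_, ?_⟩
  · refine le_trans ?_ hsparse
    rw [← Set.ncard_coe_finset]
    refine Nat.cast_le.2 (Set.ncard_le_ncard (fun i hi => ?_) (Set.toFinite _))
    have hxi : 0 < x i ^ 2 := ht.trans_lt (mem_filter.1 hi).2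
    exact fun h => by simp [h] at hxi
  · rw [div_le_iff₀ (by have := hne.card_pos; positivity)]
    exact hcut.trans_eq (by ring)

/-- Hard direction of the sparse Cheeger inequality with improved constant:
φ_δ(G) ≤ sqrt((2 − λ_δ)·λ_δ).  For every nonzero δn-sparse vector x with
Rayleigh quotient λ, there is a nonempty set S with |S| ≤ δn whose edge
expansion is at most sqrt((2 − λ)·λ). -/
theorem sparse_cheeger_hard_direction (n d : ℕ) (hd : 0 < d)
    (A : Matrix (Fin n) (Fin n) ℝ) (hsymm : A.IsSymm)
    (h01 : ∀ i j, A i j = 0 ∨ A i j = 1) (hdiag : ∀ i, A i i = 0)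
    (hreg : ∀ i, ∑ j, A i j = d)
    (δ : ℝ) (hδ0 : 0 < δ) (hδ : δ ≤ 1 / 2)
    (x : Fin n → ℝ) (hx : x ≠ 0)
    (hsparse : ((Function.support x).ncard : ℝ) ≤ δ * n)
    (lam : ℝ)
    (hlam : lam = (x ⬝ᵥ (1 - (d : ℝ)⁻¹ • A).mulVec x) / (x ⬝ᵥ x)) :
    ∃ S : Finset (Fin n), S.Nonempty ∧ ((S.card : ℝ) ≤ δ * n) ∧
      (∑ i ∈ S, ∑ j ∈ Sᶜ, A i j) / (d * S.card)
        ≤ Real.sqrt ((2 - lam) * lam) :=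
  sparse_cheeger_hard_direction_general n d hd A hsymm h01 hreg δ x hx hsparse lam hlam
end

section
/- Let G be a d-regular graph with adjacency matrix A and let x ∈ R^n satisfy 0 ≤ x_i ≤ 1 for all i. For t ∈ (0,1) define S_t = {i : x_i ≥ t}. If t is drawn with density f(t) = 2t on (0,1), then E[|E(S_t, V\S_t)|] = (1/2) Σ_{i,j} A_{ij} |x_i^2 − x_j^2|. -/
/-!
An ordered pair `(i, j)` with `x j < x i` is cut by `S_t` exactly when `t ∈ (x j, x i]`, an
interval of mass `x i ^ 2 - x j ^ 2` under the density `2t`. Integrating term by term gives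
`∑ i j, A i j * max (x i ^ 2 - x j ^ 2) 0`, and by the symmetry of `A` the positive parts of the
two orientations of each pair add up to half the sum of `A i j * |x i ^ 2 - x j ^ 2|` over both.
-/

open Finset Matrix MeasureTheory

variable {ι : Type*} [Fintype ι]

theorem sum_threshold_cut_eq_sum_indicator [DecidableEq ι] (A : Matrix ι ι ℝ) (x : ι → ℝ)
    (t : ℝ) :
    ∑ i ∈ ({i | t ≤ x i} : Finset ι), ∑ j ∈ ({i | t ≤ x i} : Finset ι)ᶜ, A i j
      = ∑ i, ∑ j, A i j * (Set.Ioc (x j) (x i)).indicator 1 t := by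
  rw [Finset.compl_filter, Finset.sum_filter]
  refine Finset.sum_congr rfl fun i _ => ?_
  rw [Finset.sum_filter]
  split_ifs with hi
  · refine Finset.sum_congr rfl fun j _ => ?_
    by_cases hj : t ≤ x j <;> simp [Set.indicator_apply, hi, hj]
  · simp [hi]

theorem integrableOn_indicator_Ioc_two_mul (a b : ℝ) :
    IntegrableOn (fun t => (Set.Ioc a b).indicator (fun t => 2 * t) t) (Set.Ioo (0 : ℝ) 1) :=
  (((continuous_const.mul continuous_id).integrableOn_Icc (a := 0) (b := 1)).mono_set
    Set.Ioo_subset_Icc_self).indicator measurableSet_Ioc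

theorem integral_Ioo_zero_one_indicator_Ioc_two_mul {a b : ℝ} (ha : 0 ≤ a) (hb : 0 ≤ b)
    (hb₁ : b ≤ 1) :
    ∫ t in Set.Ioo (0 : ℝ) 1, (Set.Ioc a b).indicator (fun t => 2 * t) t
      = max (b ^ 2 - a ^ 2) 0 := by
  rw [Measure.restrict_congr_set Ioo_ae_eq_Icc, setIntegral_indicator measurableSet_Ioc]
  rcases le_or_gt a b with hab | hab
  · have hsub : Set.Icc (0 : ℝ) 1 ∩ Set.Ioc a b = Set.Ioc a b :=
      Set.inter_eq_right.mpr fun t ht => ⟨ha.trans ht.1.le, ht.2.trans hb₁⟩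
    rw [hsub, ← intervalIntegral.integral_of_le hab, intervalIntegral.integral_const_mul,
      integral_id, max_eq_left (by nlinarith)]
    ring
  · rw [Set.Ioc_eq_empty (not_lt.mpr hab.le), Set.inter_empty, max_eq_right (by nlinarith)]
    simp

theorem sum_mul_max_sub_zero_eq_half_sum_mul_abs {A : Matrix ι ι ℝ} (hA : A.IsSymm)
    (f : ι → ℝ) :
    ∑ i, ∑ j, A i j * max (f i - f j) 0 = 1 / 2 * ∑ i, ∑ j, A i j * |f i - f j| := by
  have hswap : ∑ i, ∑ j, A i j * max (f i - f j) 0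
      = ∑ i, ∑ j, A i j * max (-(f i - f j)) 0 := by
    rw [Finset.sum_comm]
    simp_rw [hA.apply, neg_sub]
  have hsplit : ∑ i, ∑ j, A i j * |f i - f j|
      = ∑ i, ∑ j, A i j * max (f i - f j) 0 + ∑ i, ∑ j, A i j * max (-(f i - f j)) 0 := by
    simp_rw [← max_zero_add_max_neg_zero_eq_abs_self, mul_add, Finset.sum_add_distrib]
  linarith

theorem expected_cut_size_general (n : ℕ)
    (A : Matrix (Fin n) (Fin n) ℝ) (hsymm : A.IsSymm)
    (x : Fin n → ℝ) (hpos : ∀ i, 0 ≤ x i) (hle : ∀ i, x i ≤ 1) :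
    ∫ t in Set.Ioo (0 : ℝ) 1,
        (2 * t) * ∑ i ∈ ({i | t ≤ x i} : Finset (Fin n)),
          ∑ j ∈ ({i | t ≤ x i} : Finset (Fin n))ᶜ, A i j
      = (1 / 2) * ∑ i, ∑ j, A i j * |x i ^ 2 - x j ^ 2| := by
  have hpointwise (t : ℝ) : (2 * t) * ∑ i ∈ ({i | t ≤ x i} : Finset (Fin n)),
      ∑ j ∈ ({i | t ≤ x i} : Finset (Fin n))ᶜ, A i j
        = ∑ i, ∑ j, A i j * (Set.Ioc (x j) (x i)).indicator (fun s => 2 * s) t := by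
    simp_rw [sum_threshold_cut_eq_sum_indicator, Finset.mul_sum, mul_left_comm (2 * t),
      ← Set.indicator_mul_right, Pi.one_apply, mul_one]
  have hint (i j : Fin n) :=
    (integrableOn_indicator_Ioc_two_mul (x j) (x i)).const_mul (A i j)
  calc _ = ∑ i, ∑ j, ∫ t in Set.Ioo (0 : ℝ) 1,
          A i j * (Set.Ioc (x j) (x i)).indicator (fun s => 2 * s) t := by
        simp_rw [hpointwise]
        rw [integral_finsetSum _ fun i _ => integrable_finsetSum _ fun j _ => hint i j]
        exact Finset.sum_congr rfl fun i _ => integral_finsetSum _ fun j _ => hint i j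
    _ = ∑ i, ∑ j, A i j * max (x i ^ 2 - x j ^ 2) 0 := by
        simp_rw [integral_const_mul,
          integral_Ioo_zero_one_indicator_Ioc_two_mul (hpos _) (hpos _) (hle _)]
    _ = _ := sum_mul_max_sub_zero_eq_half_sum_mul_abs hsymm _

/-- If 0 ≤ x_i ≤ 1 and t is drawn on (0,1) with density 2t, the expected number
of edges cut by the threshold set S_t = {i : x_i ≥ t} equals
(1/2) Σ_{i,j} A_{ij} |x_i² − x_j²|. -/
theorem expected_cut_size (n d : ℕ) (hd : 0 < d)
    (A : Matrix (Fin n) (Fin n) ℝ) (hsymm : A.IsSymm)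
    (h01 : ∀ i j, A i j = 0 ∨ A i j = 1) (hdiag : ∀ i, A i i = 0)
    (hreg : ∀ i, ∑ j, A i j = d)
    (x : Fin n → ℝ) (hpos : ∀ i, 0 ≤ x i) (hle : ∀ i, x i ≤ 1) :
    ∫ t in Set.Ioo (0 : ℝ) 1,
        (2 * t) * ∑ i ∈ ({i | t ≤ x i} : Finset (Fin n)),
          ∑ j ∈ ({i | t ≤ x i} : Finset (Fin n))ᶜ, A i j
      = (1 / 2) * ∑ i, ∑ j, A i j * |x i ^ 2 - x j ^ 2| :=
  expected_cut_size_general n A hsymm x hpos hle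
end

section
/- Let M be an m×n real matrix with M^T M = L, the normalized Laplacian of a d-regular graph G. If there exists a set S of size at most s with edge expansion φ_G(S) ≤ ε, then the indicator vector x_S is s-sparse and satisfies ||M x_S||_2 ≤ sqrt(ε) ||x_S||_2, so M fails the lower RIP bound (1−δ')||x||_2 ≤ ||Mx||_2 whenever sqrt(ε) < 1 − δ'; in particular, M is not (s, δ')-RIP for any δ' with 1 − δ' > sqrt(ε). -/
open Finset Matrix

/-- If M^T M = L and there is a set S of size ≤ s with expansion ≤ ε, then the
indicator vector x_S is s-sparse, satisfies ‖M x_S‖ ≤ sqrt(ε)·‖x_S‖, and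
consequently M is not (s, δ')-RIP for any δ' with sqrt(ε) < 1 − δ'. -/
theorem small_expansion_breaks_rip (n d m : ℕ) (hd : 0 < d)
    (A : Matrix (Fin n) (Fin n) ℝ) (hsymm : A.IsSymm)
    (h01 : ∀ i j, A i j = 0 ∨ A i j = 1) (hdiag : ∀ i, A i i = 0)
    (hreg : ∀ i, ∑ j, A i j = d)
    (M : Matrix (Fin m) (Fin n) ℝ) (hM : Mᵀ * M = 1 - (d : ℝ)⁻¹ • A)
    (s : ℕ) (ε : ℝ) (hε : 0 ≤ ε)
    (S : Finset (Fin n)) (hS : S.Nonempty) (hScard : S.card ≤ s)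
    (hexp : (∑ i ∈ S, ∑ j ∈ Sᶜ, A i j) / (d * S.card) ≤ ε) :
    let xS : Fin n → ℝ := fun i => if i ∈ S then 1 else 0
    (Function.support xS).ncard ≤ s ∧
    Real.sqrt (M.mulVec xS ⬝ᵥ M.mulVec xS)
      ≤ Real.sqrt ε * Real.sqrt (xS ⬝ᵥ xS) ∧
    ∀ δ' : ℝ, Real.sqrt ε < 1 - δ' →
      ¬ (∀ y : Fin n → ℝ, (Function.support y).ncard ≤ s →
          (1 - δ') * Real.sqrt (y ⬝ᵥ y) ≤ Real.sqrt (M.mulVec y ⬝ᵥ M.mulVec y) ∧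
          Real.sqrt (M.mulVec y ⬝ᵥ M.mulVec y) ≤ (1 + δ') * Real.sqrt (y ⬝ᵥ y)) := by
  intro xS
  have hcard : (0:ℝ) < S.card := by exact_mod_cast hS.card_pos
  have hdpos : (0:ℝ) < d := by exact_mod_cast hd
  have h1 : (Function.support xS).ncard ≤ s := by
    have : Function.support xS = ↑S := by
      ext i; simp [xS, Function.mem_support]
    rw [this, Set.ncard_coe_finset]; exact hScard
  set E : ℝ := ∑ i ∈ S, ∑ j ∈ Sᶜ, A i j with hE
  have hEnn : 0 ≤ E := by
    apply Finset.sum_nonneg; intro i _; apply Finset.sum_nonneg; intro j _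
    rcases h01 i j with h | h <;> simp [h]
  have hxx : xS ⬝ᵥ xS = S.card := by
    simp only [dotProduct, xS, ite_mul, one_mul, zero_mul, if_pos, Finset.sum_ite_mem,
      Finset.univ_inter]
    simp
  have hAxx : xS ⬝ᵥ A.mulVec xS = ∑ i ∈ S, ∑ j ∈ S, A i j := by
    simp only [dotProduct, mulVec, xS, mul_ite, mul_one, mul_zero, ite_mul, one_mul, zero_mul,
      Finset.sum_ite_mem, Finset.univ_inter]
  have hinner : ∑ i ∈ S, ∑ j ∈ S, A i j = d * S.card - E := by
    have : ∀ i ∈ S, ∑ j ∈ S, A i j = d - ∑ j ∈ Sᶜ, A i j := by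
      intro i _
      have := Finset.sum_add_sum_compl S (fun j => A i j)
      rw [hreg i] at this
      linarith
    rw [Finset.sum_congr rfl this, Finset.sum_sub_distrib]
    simp [mul_comm, hE]
  have key : M.mulVec xS ⬝ᵥ M.mulVec xS = E / d := by
    have h2 : M.mulVec xS ⬝ᵥ M.mulVec xS = xS ⬝ᵥ (Mᵀ * M).mulVec xS := by
      conv_rhs => rw [← mulVec_mulVec, dotProduct_mulVec, vecMul_transpose]
    rw [h2, hM, sub_mulVec, one_mulVec, smul_mulVec, dotProduct_sub,
      dotProduct_smul, smul_eq_mul, hxx, hAxx, hinner]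
    field_simp
    ring
  have hEd : E / d ≤ ε * S.card := by
    have h3 : E ≤ ε * (d * S.card) := by
      rw [div_le_iff₀ (by positivity)] at hexp
      linarith
    rw [div_le_iff₀ hdpos]
    nlinarith
  have h2 : Real.sqrt (M.mulVec xS ⬝ᵥ M.mulVec xS)
      ≤ Real.sqrt ε * Real.sqrt (xS ⬝ᵥ xS) := by
    rw [key, hxx, ← Real.sqrt_mul hε]
    exact Real.sqrt_le_sqrt hEd
  refine ⟨h1, h2, ?_⟩
  intro δ' hδ' hrip
  obtain ⟨hlo, _⟩ := hrip xS h1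
  have hsc : 0 < Real.sqrt (xS ⬝ᵥ xS) := by
    rw [hxx]; exact Real.sqrt_pos.2 hcard
  have : Real.sqrt ε * Real.sqrt (xS ⬝ᵥ xS) < (1 - δ') * Real.sqrt (xS ⬝ᵥ xS) :=
    mul_lt_mul_of_pos_right hδ' hsc
  linarith
end
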